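/- The set of Baxter permutations of [n] (those avoiding the vincular patterns 3\underline{14}2 and 2\underline{41}3) equals the set of permutations avoiding both \overline{2}41\overline{3} and \overline{3}14\overline{2}. -/

import Mathlib

namespace Paper

variable {n : ℕ}

/-- The 1-based position corresponding to `i : Fin n`. -/
def pv (i : Fin n) : ℕ := (i : ℕ) + 1

/-- The 1-based letter of the word `f` at 1-based position `k` (0 if out of range). -/
def valAt (f : Fin n → Fin n) (k : ℕ) : ℕ :=
  if h : 1 ≤ k ∧ k ≤ n then ((f ⟨k - 1, by omega⟩ : Fin n) : ℕ) + 1 else 0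

/-- The map θ̂ : the 1-based `i`-th letter of `hatTheta f` is `σ̂_{n+1-i}`,
where `σ̂ₐ = n - a` (1-based) if `a < n` and `n̂ = n`. (0-based encoding.) -/
def hatTheta (f : Fin n → Fin n) (i : Fin n) : Fin n :=
  if ((f i.rev : ℕ)) = n - 1 then f i.rev
  else ⟨n - 2 - (f i.rev : ℕ), by have := i.isLt; omega⟩

end Paper

namespace Paper

variable {n : ℕ}

/-- `f` contains the vincular pattern 3\underline{14}2:
∃ i < j, j+1 < ℓ with σⱼ < σ_ℓ < σᵢ < σ_{j+1} (1-based). -/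
def Contains3142 (f : Fin n → Fin n) : Prop :=
  ∃ i j l : Fin n, pv i < pv j ∧ pv j + 1 < pv l ∧
    valAt f (pv j) < valAt f (pv l) ∧ valAt f (pv l) < valAt f (pv i) ∧
    valAt f (pv i) < valAt f (pv j + 1)

/-- `f` contains the vincular pattern 2\underline{41}3:
∃ i < j, j+1 < ℓ with σ_{j+1} < σᵢ < σ_ℓ < σⱼ (1-based). -/
def Contains2413 (f : Fin n → Fin n) : Prop :=
  ∃ i j l : Fin n, pv i < pv j ∧ pv j + 1 < pv l ∧
    valAt f (pv j + 1) < valAt f (pv i) ∧ valAt f (pv i) < valAt f (pv l) ∧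
    valAt f (pv l) < valAt f (pv j)

/-- `f` contains \overline{2}41\overline{3}:
∃ i < j < k < ℓ with σₖ < σᵢ < σ_ℓ = σᵢ + 1 < σⱼ. -/
def Contains2b41_3b (f : Fin n → Fin n) : Prop :=
  ∃ i j k l : Fin n, pv i < pv j ∧ pv j < pv k ∧ pv k < pv l ∧
    valAt f (pv k) < valAt f (pv i) ∧ valAt f (pv l) = valAt f (pv i) + 1 ∧
    valAt f (pv i) + 1 < valAt f (pv j)

/-- `f` contains \overline{3}14\overline{2}:
∃ i < j < k < ℓ with σⱼ < σ_ℓ < σᵢ = σ_ℓ + 1 < σₖ. -/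
def Contains3b14_2b (f : Fin n → Fin n) : Prop :=
  ∃ i j k l : Fin n, pv i < pv j ∧ pv j < pv k ∧ pv k < pv l ∧
    valAt f (pv j) < valAt f (pv l) ∧ valAt f (pv i) = valAt f (pv l) + 1 ∧
    valAt f (pv l) + 1 < valAt f (pv k)

/-- A Baxter permutation avoids both 3\underline{14}2 and 2\underline{41}3. -/
def IsBaxter (f : Fin n → Fin n) : Prop :=
  ¬ Contains3142 f ∧ ¬ Contains2413 f

end Paper

namespace Paper

variable {n : ℕ}

private lemma crossing {P : ℕ → Prop} {a b : ℕ} (hab : a ≤ b)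
    (ha : P a) (hb : ¬ P b) : ∃ p, a ≤ p ∧ p < b ∧ P p ∧ ¬ P (p + 1) := by
  classical
  have hex : ∃ m, ¬ P (a + m) := ⟨b - a, by rwa [Nat.add_sub_cancel' hab]⟩
  have hc : ¬ P (a + Nat.find hex) := Nat.find_spec hex
  have hcb : Nat.find hex ≤ b - a := Nat.find_min' hex (by rwa [Nat.add_sub_cancel' hab])
  have hc0 : Nat.find hex ≠ 0 := by
    intro h; rw [h, Nat.add_zero] at hc; exact hc ha
  have hprev : P (a + (Nat.find hex - 1)) := by
    by_contra h
    have := Nat.find_min' hex h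
    omega
  refine ⟨a + (Nat.find hex - 1), Nat.le_add_right _ _, by omega, hprev, ?_⟩
  have he : a + (Nat.find hex - 1) + 1 = a + Nat.find hex := by omega
  rw [he]; exact hc

private lemma valAt_pv (f : Fin n → Fin n) (i : Fin n) : valAt f (pv i) = (f i : ℕ) + 1 := by
  have hi := i.isLt
  rw [valAt, dif_pos (by simp [pv])]
  simp [pv]

private lemma valAt_pv_succ (f : Fin n → Fin n) (j : Fin n) (h : (j:ℕ) + 1 < n) :
    valAt f (pv j + 1) = (f ⟨(j:ℕ)+1, h⟩ : ℕ) + 1 := by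
  rw [valAt, dif_pos (by simp [pv]; omega)]
  simp [pv]

private lemma c2413_to_barred (σ : Equiv.Perm (Fin n)) (h : Contains2413 ⇑σ) :
    Contains2b41_3b ⇑σ := by
  obtain ⟨i, j, l, hij, hjl, h1, h2, h3⟩ := h
  simp only [pv] at hij hjl
  have hln := l.isLt
  have hj1 : (j:ℕ) + 1 < n := by omega
  rw [valAt_pv_succ _ _ hj1, valAt_pv] at h1
  rw [valAt_pv, valAt_pv] at h2
  rw [valAt_pv, valAt_pv] at h3
  have hsi := (σ i).isLt
  have hsl := (σ l).isLt
  obtain ⟨v, hva, hvb, hPv, hPv1⟩ := crossing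
    (P := fun w => ∃ hw : w < n, ((σ.symm ⟨w, hw⟩ : Fin n) : ℕ) < (j:ℕ))
    (a := ((σ i : Fin n) : ℕ)) (b := ((σ l : Fin n) : ℕ))
    (by omega)
    ⟨hsi, by rw [Fin.eta, Equiv.symm_apply_apply]; omega⟩
    (by rintro ⟨hw, hlt⟩; rw [Fin.eta, Equiv.symm_apply_apply] at hlt; omega)
  have hvn : v < n := by omega
  have hv1n : v + 1 < n := by omega
  set I := σ.symm ⟨v, hvn⟩ with hIdef
  set L := σ.symm ⟨v+1, hv1n⟩ with hLdef
  have hfI : ((σ I : Fin n) : ℕ) = v := by rw [hIdef, Equiv.apply_symm_apply]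
  have hfL : ((σ L : Fin n) : ℕ) = v + 1 := by rw [hLdef, Equiv.apply_symm_apply]
  have hIj : (I:ℕ) < (j:ℕ) := by obtain ⟨hw, hlt⟩ := hPv; exact hlt
  have hLj : ¬ (L:ℕ) < (j:ℕ) := fun hh => hPv1 ⟨hv1n, hh⟩
  have hLnej : (L:ℕ) ≠ (j:ℕ) := by
    intro he
    have h' : ((σ L : Fin n) : ℕ) = ((σ j : Fin n) : ℕ) :=
      congrArg Fin.val (congrArg σ (Fin.ext he))
    omega
  have hLnej1 : (L:ℕ) ≠ (j:ℕ) + 1 := by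
    intro he
    have h' : ((σ L : Fin n) : ℕ) = ((σ ⟨(j:ℕ)+1, hj1⟩ : Fin n) : ℕ) :=
      congrArg Fin.val (congrArg σ (Fin.ext he))
    omega
  refine ⟨I, j, ⟨(j:ℕ)+1, hj1⟩, L, ?_, ?_, ?_, ?_, ?_, ?_⟩
  · simp only [pv]; omega
  · simp only [pv]; omega
  · simp only [pv]; omega
  · rw [valAt_pv, valAt_pv]; omega
  · rw [valAt_pv, valAt_pv]; omega
  · rw [valAt_pv, valAt_pv]; omega

private lemma barred_to_c2413 (σ : Equiv.Perm (Fin n)) (h : Contains2b41_3b ⇑σ) :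
    Contains2413 ⇑σ := by
  obtain ⟨i, j, k, l, hij, hjk, hkl, h1, h2, h3⟩ := h
  simp only [pv] at hij hjk hkl
  rw [valAt_pv, valAt_pv] at h1
  rw [valAt_pv, valAt_pv] at h2
  rw [valAt_pv, valAt_pv] at h3
  have hln := l.isLt
  obtain ⟨p, hpa, hpb, hPp, hPp1⟩ := crossing
    (P := fun p => ∃ hp : p < n, ((σ i : Fin n) : ℕ) < ((σ ⟨p, hp⟩ : Fin n) : ℕ))
    (a := (j:ℕ)) (b := (k:ℕ))
    (by omega)
    ⟨j.isLt, by rw [Fin.eta]; omega⟩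
    (by rintro ⟨hp, hlt⟩; rw [Fin.eta] at hlt; omega)
  have hpn : p < n := by omega
  have hp1n : p + 1 < n := by omega
  have hPJ : ((σ i : Fin n) : ℕ) < ((σ ⟨p, hpn⟩ : Fin n) : ℕ) := by
    obtain ⟨hp', hlt⟩ := hPp; exact hlt
  have hK : ¬ ((σ i : Fin n) : ℕ) < ((σ ⟨p+1, hp1n⟩ : Fin n) : ℕ) :=
    fun hh => hPp1 ⟨hp1n, hh⟩
  have hKne : ((σ ⟨p+1, hp1n⟩ : Fin n) : ℕ) ≠ ((σ i : Fin n) : ℕ) := by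
    intro he
    have h' : (⟨p+1, hp1n⟩ : Fin n) = i := σ.injective (Fin.ext he)
    have := congrArg Fin.val h'
    simp at this
    omega
  have hJne : ((σ ⟨p, hpn⟩ : Fin n) : ℕ) ≠ ((σ l : Fin n) : ℕ) := by
    intro he
    have h' : (⟨p, hpn⟩ : Fin n) = l := σ.injective (Fin.ext he)
    have := congrArg Fin.val h'
    simp at this
    omega
  have hJ1 : ((⟨p, hpn⟩ : Fin n) : ℕ) + 1 < n := hp1n
  refine ⟨i, ⟨p, hpn⟩, l, ?_, ?_, ?_, ?_, ?_⟩
  · simp only [pv]; omega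
  · simp only [pv]; omega
  · rw [valAt_pv_succ _ _ hJ1, valAt_pv]
    have he : (⟨((⟨p, hpn⟩ : Fin n) : ℕ) + 1, hJ1⟩ : Fin n) = ⟨p+1, hp1n⟩ := rfl
    rw [he]; omega
  · rw [valAt_pv, valAt_pv]; omega
  · rw [valAt_pv, valAt_pv]; omega

private lemma c3142_to_barred (σ : Equiv.Perm (Fin n)) (h : Contains3142 ⇑σ) :
    Contains3b14_2b ⇑σ := by
  obtain ⟨i, j, l, hij, hjl, h1, h2, h3⟩ := h
  simp only [pv] at hij hjl
  have hln := l.isLt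
  have hj1 : (j:ℕ) + 1 < n := by omega
  rw [valAt_pv, valAt_pv] at h1
  rw [valAt_pv, valAt_pv] at h2
  rw [valAt_pv, valAt_pv_succ _ _ hj1] at h3
  have hsi := (σ i).isLt
  have hsl := (σ l).isLt
  obtain ⟨v, hva, hvb, hPv, hPv1⟩ := crossing
    (P := fun w => ∃ hw : w < n, (j:ℕ) < ((σ.symm ⟨w, hw⟩ : Fin n) : ℕ))
    (a := ((σ l : Fin n) : ℕ)) (b := ((σ i : Fin n) : ℕ))
    (by omega)
    ⟨hsl, by rw [Fin.eta, Equiv.symm_apply_apply]; omega⟩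
    (by rintro ⟨hw, hlt⟩; rw [Fin.eta, Equiv.symm_apply_apply] at hlt; omega)
  have hvn : v < n := by omega
  have hv1n : v + 1 < n := by omega
  set L := σ.symm ⟨v, hvn⟩ with hLdef
  set I := σ.symm ⟨v+1, hv1n⟩ with hIdef
  have hfL : ((σ L : Fin n) : ℕ) = v := by rw [hLdef, Equiv.apply_symm_apply]
  have hfI : ((σ I : Fin n) : ℕ) = v + 1 := by rw [hIdef, Equiv.apply_symm_apply]
  have hLj : (j:ℕ) < (L:ℕ) := by obtain ⟨hw, hlt⟩ := hPv; exact hlt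
  have hIj : ¬ (j:ℕ) < (I:ℕ) := fun hh => hPv1 ⟨hv1n, hh⟩
  have hInej : (I:ℕ) ≠ (j:ℕ) := by
    intro he
    have h' : ((σ I : Fin n) : ℕ) = ((σ j : Fin n) : ℕ) :=
      congrArg Fin.val (congrArg σ (Fin.ext he))
    omega
  have hLnej1 : (L:ℕ) ≠ (j:ℕ) + 1 := by
    intro he
    have h' : ((σ L : Fin n) : ℕ) = ((σ ⟨(j:ℕ)+1, hj1⟩ : Fin n) : ℕ) :=
      congrArg Fin.val (congrArg σ (Fin.ext he))
    omega
  refine ⟨I, j, ⟨(j:ℕ)+1, hj1⟩, L, ?_, ?_, ?_, ?_, ?_, ?_⟩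
  · simp only [pv]; omega
  · simp only [pv]; omega
  · simp only [pv]; omega
  · rw [valAt_pv, valAt_pv]; omega
  · rw [valAt_pv, valAt_pv]; omega
  · rw [valAt_pv, valAt_pv]; omega

private lemma barred_to_c3142 (σ : Equiv.Perm (Fin n)) (h : Contains3b14_2b ⇑σ) :
    Contains3142 ⇑σ := by
  obtain ⟨i, j, k, l, hij, hjk, hkl, h1, h2, h3⟩ := h
  simp only [pv] at hij hjk hkl
  rw [valAt_pv, valAt_pv] at h1
  rw [valAt_pv, valAt_pv] at h2
  rw [valAt_pv, valAt_pv] at h3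
  have hln := l.isLt
  obtain ⟨p, hpa, hpb, hPp, hPp1⟩ := crossing
    (P := fun p => ∃ hp : p < n, ((σ ⟨p, hp⟩ : Fin n) : ℕ) < ((σ i : Fin n) : ℕ))
    (a := (j:ℕ)) (b := (k:ℕ))
    (by omega)
    ⟨j.isLt, by rw [Fin.eta]; omega⟩
    (by rintro ⟨hp, hlt⟩; rw [Fin.eta] at hlt; omega)
  have hpn : p < n := by omega
  have hp1n : p + 1 < n := by omega
  have hPJ : ((σ ⟨p, hpn⟩ : Fin n) : ℕ) < ((σ i : Fin n) : ℕ) := by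
    obtain ⟨hp', hlt⟩ := hPp; exact hlt
  have hK : ¬ ((σ ⟨p+1, hp1n⟩ : Fin n) : ℕ) < ((σ i : Fin n) : ℕ) :=
    fun hh => hPp1 ⟨hp1n, hh⟩
  have hKne : ((σ ⟨p+1, hp1n⟩ : Fin n) : ℕ) ≠ ((σ i : Fin n) : ℕ) := by
    intro he
    have h' : (⟨p+1, hp1n⟩ : Fin n) = i := σ.injective (Fin.ext he)
    have := congrArg Fin.val h'
    simp at this
    omega
  have hJne : ((σ ⟨p, hpn⟩ : Fin n) : ℕ) ≠ ((σ l : Fin n) : ℕ) := by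
    intro he
    have h' : (⟨p, hpn⟩ : Fin n) = l := σ.injective (Fin.ext he)
    have := congrArg Fin.val h'
    simp at this
    omega
  have hJ1 : ((⟨p, hpn⟩ : Fin n) : ℕ) + 1 < n := hp1n
  refine ⟨i, ⟨p, hpn⟩, l, ?_, ?_, ?_, ?_, ?_⟩
  · simp only [pv]; omega
  · simp only [pv]; omega
  · rw [valAt_pv, valAt_pv]; omega
  · rw [valAt_pv, valAt_pv]; omega
  · rw [valAt_pv, valAt_pv_succ _ _ hJ1]
    have he : (⟨((⟨p, hpn⟩ : Fin n) : ℕ) + 1, hJ1⟩ : Fin n) = ⟨p+1, hp1n⟩ := rfl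
    rw [he]; omega

end Paper

namespace Paper

/-- Baxter permutations are exactly the permutations avoiding both
\overline{2}41\overline{3} and \overline{3}14\overline{2}. -/
theorem baxter_iff_barred (n : ℕ) (σ : Equiv.Perm (Fin n)) :
    IsBaxter ⇑σ ↔ (¬ Contains2b41_3b ⇑σ ∧ ¬ Contains3b14_2b ⇑σ) := by
  constructor
  · rintro ⟨h1, h2⟩
    exact ⟨fun hc => h2 (barred_to_c2413 σ hc), fun hc => h1 (barred_to_c3142 σ hc)⟩
  · rintro ⟨h1, h2⟩
    exact ⟨fun hc => h2 (c3142_to_barred σ hc), fun hc => h1 (c2413_to_barred σ hc)⟩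

end Paper
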